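/- arXiv:2011.08443 — 6 statements merged into one kernel-verified Lean document; each statement's English description precedes it below -/
import Mathlib

section
/- For every bounded linear operator A on a complex Hilbert space H and every v ∈ [0,1], the numerical radius satisfies ω(A) ≤ (1/2) ‖ |A|^{2(1-v)} + |A*|^{2v} ‖. -/
/-! With `R = A* A`, `S = A A*`, `ε > 0`, `Φ = (R + ε)^(c/2)` and `Ψ = (R + ε)^(-c/2)` one has
`⟨A x, y⟩ = ⟨Φ x, Ψ A* y⟩`. The intertwining relation `A f(R) = f(S) A` turns `‖Ψ A* y‖²` into
`⟨(S + ε)^(-c) S y, y⟩ ≤ ⟨S^(1-c) y, y⟩`, while `‖Φ x‖² ≤ ⟨R^c x, x⟩ + ε^c ‖x‖²`. Letting `ε → 0`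
gives Kato's mixed Schwarz inequality `|⟨A x, y⟩|² ≤ ⟨|A|^(2c) x, x⟩ ⟨|A*|^(2(1-c)) y, y⟩`, and
the bound on the numerical radius follows from it at `y = x` by AM-GM. -/

variable {H : Type*} [NormedAddCommGroup H] [InnerProductSpace ℂ H] [CompleteSpace H]

/-- The numerical radius of a bounded linear operator. -/
noncomputable def numRadius (A : H →L[ℂ] H) : ℝ :=
  ⨆ x : {x : H // ‖x‖ = 1}, ‖(inner ℂ (A x) (x : H) : ℂ)‖

/-- The absolute value |A| = (A*A)^(1/2). -/
noncomputable def absOp (A : H →L[ℂ] H) : H →L[ℂ] H :=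
  CFC.sqrt (ContinuousLinearMap.adjoint A * A)

/-- Real powers of an operator via continuous functional calculus. -/
noncomputable def opRpow (T : H →L[ℂ] H) (r : ℝ) : H →L[ℂ] H :=
  cfc (fun t : ℝ => t ^ r) T

section Semiconj

variable {A : Type*} [Ring A] [StarRing A] [Algebra ℝ A] [TopologicalSpace A]
  [ContinuousFunctionalCalculus ℝ A IsSelfAdjoint] [IsTopologicalRing A] [T2Space A]

theorem SemiconjBy.cfc_real {x a b : A} (h : SemiconjBy x a b) (ha : IsSelfAdjoint a)
    (hb : IsSelfAdjoint b) (f : ℝ → ℝ) (hf : ContinuousOn f (spectrum ℝ a ∪ spectrum ℝ b)) :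
    SemiconjBy x (cfc f a) (cfc f b) := by
  set K := spectrum ℝ a ∪ spectrum ℝ b
  have : CompactSpace K := isCompact_iff_compactSpace.mp
    ((ContinuousFunctionalCalculus.isCompact_spectrum a).union
      (ContinuousFunctionalCalculus.isCompact_spectrum b))
  let ιa : C(spectrum ℝ a, K) := ⟨Set.inclusion Set.subset_union_left, continuous_inclusion _⟩
  let ιb : C(spectrum ℝ b, K) := ⟨Set.inclusion Set.subset_union_right, continuous_inclusion _⟩
  suffices key : ∀ g : C(K, ℝ), SemiconjBy x (cfcHom ha (g.comp ιa)) (cfcHom hb (g.comp ιb)) by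
    rw [cfc_apply f a ha (hf.mono Set.subset_union_left),
      cfc_apply f b hb (hf.mono Set.subset_union_right)]
    exact key ⟨K.domRestrict f, hf.domRestrict⟩
  have hid : SemiconjBy x (cfcHom ha (((ContinuousMap.id ℝ).restrict K).comp ιa))
      (cfcHom hb (((ContinuousMap.id ℝ).restrict K).comp ιb)) := by
    convert h using 1
    · exact cfcHom_id ha
    · exact cfcHom_id hb
  intro g
  induction g using ContinuousMap.induction_on_of_compact with
  | const r =>
    change SemiconjBy x (cfcHom ha (algebraMap ℝ _ r)) (cfcHom hb (algebraMap ℝ _ r))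
    rw [AlgHomClass.commutes, AlgHomClass.commutes]
    exact (Algebra.commutes r x).symm
  | id => exact hid
  | star_id => simpa only [star_trivial] using hid
  | add f g hf hg =>
    simpa only [ContinuousMap.add_comp, map_add] using hf.add_right hg
  | mul f g hf hg =>
    simpa only [ContinuousMap.mul_comp, map_mul] using hf.mul_right hg
  | frequently g hg =>
    have hclosed : IsClosed {g : C(K, ℝ) |
        SemiconjBy x (cfcHom ha (g.comp ιa)) (cfcHom hb (g.comp ιb))} :=
      isClosed_eq
        ((continuous_const_mul x).comp
          ((cfcHom_continuous ha).comp (ContinuousMap.continuous_precomp ιa)))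
        ((continuous_mul_const x).comp
          ((cfcHom_continuous hb).comp (ContinuousMap.continuous_precomp ιb)))
    exact hclosed.closure_subset (mem_closure_iff_frequently.mpr hg)

end Semiconj

namespace Real

/-- The term `0 ^ c` makes this hold at `c = 0` too, where `0 ^ 0 = 1`. -/
lemma add_rpow_sub_rpow_le {t ε c : ℝ} (ht : 0 ≤ t) (hε : 0 ≤ ε) (hc₀ : 0 ≤ c) (hc₁ : c ≤ 1) :
    (t + ε) ^ c - t ^ c ≤ ε ^ c - 0 ^ c := by
  rcases hc₀.eq_or_lt with rfl | hc
  · simp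
  · rw [zero_rpow hc.ne', sub_zero, sub_le_iff_le_add']
    exact rpow_add_le_add_rpow ht hε hc₀ hc₁

lemma add_rpow_neg_mul_le_rpow_one_sub {t ε c : ℝ} (ht : 0 ≤ t) (hε : 0 ≤ ε) (hc : 0 ≤ c) :
    (t + ε) ^ (-c) * t ≤ t ^ (1 - c) := by
  rcases ht.eq_or_lt with rfl | ht
  · simpa using rpow_nonneg le_rfl (1 - c)
  · calc (t + ε) ^ (-c) * t ≤ t ^ (-c) * t :=
          mul_le_mul_of_nonneg_right (rpow_le_rpow_of_nonpos ht (by linarith) (by linarith)) ht.le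
      _ = t ^ (1 - c) := by rw [← rpow_add_one ht.ne', neg_add_eq_sub]

end Real

section ShiftedPowers

variable {A : Type*} [CStarAlgebra A] [PartialOrder A] [StarOrderedRing A] {a : A} {ε : ℝ}

lemma spectrum_subset_Ici (ha : 0 ≤ a) : spectrum ℝ a ⊆ Set.Ici 0 :=
  fun _ ht => spectrum_nonneg_of_nonneg ha ht

lemma continuousOn_add_const_rpow (hε : 0 < ε) (p : ℝ) :
    ContinuousOn (fun t : ℝ => (t + ε) ^ p) (Set.Ici 0) :=
  (continuousOn_id.add continuousOn_const).rpow_const fun _ ht =>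
    Or.inl (add_pos_of_nonneg_of_pos ht hε).ne'

lemma cfc_add_const_rpow_mul (ha : 0 ≤ a) (hε : 0 < ε) (p q : ℝ) :
    cfc (fun t : ℝ => (t + ε) ^ p) a * cfc (fun t : ℝ => (t + ε) ^ q) a =
      cfc (fun t : ℝ => (t + ε) ^ (p + q)) a := by
  rw [← cfc_mul _ _ a ((continuousOn_add_const_rpow hε p).mono (spectrum_subset_Ici ha))
    ((continuousOn_add_const_rpow hε q).mono (spectrum_subset_Ici ha))]
  exact cfc_congr fun t ht =>
    (Real.rpow_add (add_pos_of_nonneg_of_pos (spectrum_nonneg_of_nonneg ha ht) hε) p q).symm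

end ShiftedPowers

open scoped InnerProductSpace

namespace ContinuousLinearMap

variable {𝕜 E : Type*} [RCLike 𝕜] [NormedAddCommGroup E] [InnerProductSpace 𝕜 E]

lemma re_inner_le_re_inner_of_le {S T : E →L[𝕜] E} (h : S ≤ T) (x : E) :
    RCLike.re ⟪S x, x⟫_𝕜 ≤ RCLike.re ⟪T x, x⟫_𝕜 := by
  have := ((le_def S T).mp h).re_inner_nonneg_left x
  rw [sub_apply, inner_sub_left, map_sub] at this
  linarith

lemma abs_re_inner_le (T : E →L[𝕜] E) (x : E) :
    |RCLike.re ⟪T x, x⟫_𝕜| ≤ ‖T‖ * ‖x‖ ^ 2 :=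
  calc |RCLike.re ⟪T x, x⟫_𝕜| ≤ ‖⟪T x, x⟫_𝕜‖ := RCLike.abs_re_le_norm _
    _ ≤ ‖T x‖ * ‖x‖ := norm_inner_le_norm _ _
    _ ≤ ‖T‖ * ‖x‖ * ‖x‖ := by gcongr; exact T.le_opNorm x
    _ = ‖T‖ * ‖x‖ ^ 2 := by ring

lemma norm_apply_sq_of_isSelfAdjoint [CompleteSpace E] {T : E →L[𝕜] E} (hT : IsSelfAdjoint T)
    (x : E) : ‖T x‖ ^ 2 = RCLike.re ⟪(T * T) x, x⟫_𝕜 := by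
  rw [apply_norm_sq_eq_inner_adjoint_left, hT.adjoint_eq]
  rfl

end ContinuousLinearMap

open ContinuousLinearMap

lemma re_inner_cfc_add_const_rpow_le {D : H →L[ℂ] H} (hD : 0 ≤ D) {ε c : ℝ} (hε : 0 < ε)
    (hc₀ : 0 ≤ c) (hc₁ : c ≤ 1) (x : H) :
    RCLike.re ⟪cfc (fun t : ℝ => (t + ε) ^ c) D x, x⟫_ℂ ≤
      RCLike.re ⟪cfc (fun t : ℝ => t ^ c) D x, x⟫_ℂ + (ε ^ c - 0 ^ c) * ‖x‖ ^ 2 := by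
  have hrpow : ContinuousOn (fun t : ℝ => t ^ c) (spectrum ℝ D) :=
    (Real.continuous_rpow_const hc₀).continuousOn
  have hle : cfc (fun t : ℝ => (t + ε) ^ c) D ≤
      cfc (fun t : ℝ => t ^ c) D + algebraMap ℝ _ (ε ^ c - 0 ^ c) := by
    rw [← cfc_const (ε ^ c - 0 ^ c) D, ← cfc_add D _ _ hrpow]
    refine cfc_mono (fun t ht => ?_)
      ((continuousOn_add_const_rpow hε c).mono (spectrum_subset_Ici hD))
      (hrpow.add continuousOn_const)
    linarith [Real.add_rpow_sub_rpow_le (spectrum_nonneg_of_nonneg hD ht) hε.le hc₀ hc₁]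
  refine (re_inner_le_re_inner_of_le hle x).trans_eq ?_
  rw [add_apply, inner_add_left, map_add, Algebra.algebraMap_eq_smul_one, smul_apply,
    one_apply_eq_self, RCLike.real_smul_eq_coe_smul (K := ℂ), inner_smul_real_left, RCLike.smul_re,
    inner_self_eq_norm_sq]

section MixedSchwarz

open Filter Topology

variable (A : H →L[ℂ] H) {c ε : ℝ}

lemma adjoint_mul_self_nonneg : 0 ≤ adjoint A * A := star_mul_self_nonneg A

lemma self_mul_adjoint_nonneg : 0 ≤ A * adjoint A := mul_star_self_nonneg A

lemma mul_cfc_adjoint_mul_self {f : ℝ → ℝ} (hf : ContinuousOn f (Set.Ici 0)) :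
    A * cfc f (adjoint A * A) = cfc f (A * adjoint A) * A := by
  have hR := adjoint_mul_self_nonneg A
  have hS := self_mul_adjoint_nonneg A
  refine SemiconjBy.cfc_real (mul_assoc A _ _).symm hR.isSelfAdjoint hS.isSelfAdjoint f
    (hf.mono (Set.union_subset (spectrum_subset_Ici hR) (spectrum_subset_Ici hS)))

lemma inner_apply_eq_inner_cfc_add_const_rpow (hε : 0 < ε) (c : ℝ) (x y : H) :
    ⟪A x, y⟫_ℂ = ⟪cfc (fun t : ℝ => (t + ε) ^ (c / 2)) (adjoint A * A) x,
      cfc (fun t : ℝ => (t + ε) ^ (-c / 2)) (adjoint A * A) (adjoint A y)⟫_ℂ := by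
  have hR := adjoint_mul_self_nonneg A
  have hΨΦ : cfc (fun t : ℝ => (t + ε) ^ (-c / 2)) (adjoint A * A)
      (cfc (fun t : ℝ => (t + ε) ^ (c / 2)) (adjoint A * A) x) = x := by
    rw [← mul_apply_eq_comp, cfc_add_const_rpow_mul hR hε, neg_div, neg_add_cancel]
    simp only [Real.rpow_zero, cfc_const_one ℝ (adjoint A * A) hR.isSelfAdjoint, one_apply_eq_self]
  have hΨ : IsSelfAdjoint (cfc (fun t : ℝ => (t + ε) ^ (-c / 2)) (adjoint A * A)) :=
    cfc_predicate _ _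
  rw [← hΨ.adjoint_eq, adjoint_inner_right, adjoint_inner_right, hΨΦ]

lemma re_inner_cfc_add_const_rpow_adjoint_le (hε : 0 < ε) (hc₀ : 0 ≤ c) (hc₁ : c ≤ 1) (y : H) :
    RCLike.re ⟪cfc (fun t : ℝ => (t + ε) ^ (-c)) (adjoint A * A) (adjoint A y), adjoint A y⟫_ℂ ≤
      RCLike.re ⟪cfc (fun t : ℝ => t ^ (1 - c)) (A * adjoint A) y, y⟫_ℂ := by
  have hS := self_mul_adjoint_nonneg A
  have hg : ContinuousOn (fun t : ℝ => (t + ε) ^ (-c)) (spectrum ℝ (A * adjoint A)) :=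
    (continuousOn_add_const_rpow hε _).mono (spectrum_subset_Ici hS)
  have hconj : A * cfc (fun t : ℝ => (t + ε) ^ (-c)) (adjoint A * A) * adjoint A =
      cfc (fun t : ℝ => (t + ε) ^ (-c) * t) (A * adjoint A) := by
    rw [mul_cfc_adjoint_mul_self A (continuousOn_add_const_rpow hε _), mul_assoc,
      cfc_mul _ _ _ hg (continuousOn_id' _), cfc_id' ℝ (A * adjoint A)]
  rw [adjoint_inner_right A, ← mul_apply_eq_comp, ← mul_apply_eq_comp, hconj]
  refine re_inner_le_re_inner_of_le (cfc_mono (fun t ht => ?_) (hg.mul (continuousOn_id' _))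
    ((Real.continuous_rpow_const (by linarith)).continuousOn)) y
  exact Real.add_rpow_neg_mul_le_rpow_one_sub (spectrum_nonneg_of_nonneg hS ht) hε.le hc₀

lemma norm_inner_apply_sq_le_of_pos (hε : 0 < ε) (hc₀ : 0 ≤ c) (hc₁ : c ≤ 1) (x y : H) :
    ‖⟪A x, y⟫_ℂ‖ ^ 2 ≤
      (RCLike.re ⟪cfc (fun t : ℝ => t ^ c) (adjoint A * A) x, x⟫_ℂ + (ε ^ c - 0 ^ c) * ‖x‖ ^ 2) *
        RCLike.re ⟪cfc (fun t : ℝ => t ^ (1 - c)) (A * adjoint A) y, y⟫_ℂ := by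
  have hR := adjoint_mul_self_nonneg A
  set Φ := cfc (fun t : ℝ => (t + ε) ^ (c / 2)) (adjoint A * A)
  set Ψ := cfc (fun t : ℝ => (t + ε) ^ (-c / 2)) (adjoint A * A)
  have hΦ : ‖Φ x‖ ^ 2 ≤ RCLike.re ⟪cfc (fun t : ℝ => t ^ c) (adjoint A * A) x, x⟫_ℂ +
      (ε ^ c - 0 ^ c) * ‖x‖ ^ 2 := by
    rw [norm_apply_sq_of_isSelfAdjoint (cfc_predicate _ _), cfc_add_const_rpow_mul hR hε,
      add_halves]
    exact re_inner_cfc_add_const_rpow_le hR hε hc₀ hc₁ x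
  have hΨ : ‖Ψ (adjoint A y)‖ ^ 2 ≤
      RCLike.re ⟪cfc (fun t : ℝ => t ^ (1 - c)) (A * adjoint A) y, y⟫_ℂ := by
    rw [norm_apply_sq_of_isSelfAdjoint (cfc_predicate _ _), cfc_add_const_rpow_mul hR hε,
      add_halves]
    exact re_inner_cfc_add_const_rpow_adjoint_le A hε hc₀ hc₁ y
  calc ‖⟪A x, y⟫_ℂ‖ ^ 2 = ‖⟪Φ x, Ψ (adjoint A y)⟫_ℂ‖ ^ 2 := by
        rw [inner_apply_eq_inner_cfc_add_const_rpow A hε c]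
    _ ≤ (‖Φ x‖ * ‖Ψ (adjoint A y)‖) ^ 2 := by gcongr; exact norm_inner_le_norm _ _
    _ = ‖Φ x‖ ^ 2 * ‖Ψ (adjoint A y)‖ ^ 2 := mul_pow _ _ _
    _ ≤ _ := mul_le_mul hΦ hΨ (sq_nonneg _) ((sq_nonneg _).trans hΦ)

theorem norm_inner_apply_sq_le (hc₀ : 0 ≤ c) (hc₁ : c ≤ 1) (x y : H) :
    ‖⟪A x, y⟫_ℂ‖ ^ 2 ≤ RCLike.re ⟪cfc (fun t : ℝ => t ^ c) (adjoint A * A) x, x⟫_ℂ *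
      RCLike.re ⟪cfc (fun t : ℝ => t ^ (1 - c)) (A * adjoint A) y, y⟫_ℂ := by
  have hsmall : Tendsto (fun ε : ℝ => ε ^ c - 0 ^ c) (𝓝[>] 0) (𝓝 0) := by
    simpa using (((Real.continuous_rpow_const hc₀).tendsto 0).mono_left
      nhdsWithin_le_nhds).sub_const (0 ^ c)
  have hlim := ((hsmall.mul_const (‖x‖ ^ 2)).const_add
    (RCLike.re ⟪cfc (fun t : ℝ => t ^ c) (adjoint A * A) x, x⟫_ℂ)).mul_const
    (RCLike.re ⟪cfc (fun t : ℝ => t ^ (1 - c)) (A * adjoint A) y, y⟫_ℂ)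
  rw [zero_mul, add_zero] at hlim
  exact ge_of_tendsto hlim (eventually_nhdsWithin_of_forall fun ε hε =>
    norm_inner_apply_sq_le_of_pos A hε hc₀ hc₁ x y)

theorem norm_inner_apply_self_le (hc₀ : 0 ≤ c) (hc₁ : c ≤ 1) {x : H} (hx : ‖x‖ = 1) :
    ‖⟪A x, x⟫_ℂ‖ ≤ 1 / 2 * ‖cfc (fun t : ℝ => t ^ c) (adjoint A * A) +
      cfc (fun t : ℝ => t ^ (1 - c)) (A * adjoint A)‖ := by
  set P := cfc (fun t : ℝ => t ^ c) (adjoint A * A)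
  set Q := cfc (fun t : ℝ => t ^ (1 - c)) (A * adjoint A)
  have hmixed := norm_inner_apply_sq_le A hc₀ hc₁ x x
  have hsum : RCLike.re ⟪(P + Q) x, x⟫_ℂ = RCLike.re ⟪P x, x⟫_ℂ + RCLike.re ⟪Q x, x⟫_ℂ := by
    rw [add_apply, inner_add_left, map_add]
  have hnorm := abs_re_inner_le (P + Q) x
  rw [hx, hsum] at hnorm
  -- AM-GM
  have hamgm : |‖⟪A x, x⟫_ℂ‖| ≤ |(RCLike.re ⟪P x, x⟫_ℂ + RCLike.re ⟪Q x, x⟫_ℂ) / 2| :=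
    sq_le_sq.mp (by nlinarith [sq_nonneg (RCLike.re ⟪P x, x⟫_ℂ - RCLike.re ⟪Q x, x⟫_ℂ)])
  rw [abs_norm, abs_div, abs_two] at hamgm
  linarith

end MixedSchwarz

lemma opRpow_sqrt_two_mul {D : H →L[ℂ] H} (hD : 0 ≤ D) {w : ℝ} (hw : 0 ≤ w) :
    opRpow (CFC.sqrt D) (2 * w) = cfc (fun t : ℝ => t ^ w) D := by
  rw [opRpow, CFC.sqrt_eq_real_sqrt D hD, cfcₙ_eq_cfc,
    ← cfc_comp (fun t : ℝ => t ^ (2 * w)) Real.sqrt D hD.isSelfAdjoint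
      (Real.continuous_rpow_const (by positivity)).continuousOn]
  refine cfc_congr fun t ht => ?_
  rw [Function.comp_apply, Real.sqrt_eq_rpow, ← Real.rpow_mul (spectrum_nonneg_of_nonneg hD ht),
    one_div, inv_mul_cancel_left₀ two_ne_zero]

theorem stmt0 (A : H →L[ℂ] H) (v : ℝ) (hv : v ∈ Set.Icc (0:ℝ) 1) :
    numRadius A ≤ (1/2) *
      ‖opRpow (absOp A) (2*(1-v)) + opRpow (absOp (ContinuousLinearMap.adjoint A)) (2*v)‖ := by
  obtain ⟨hv₀, hv₁⟩ := hv
  rw [numRadius, absOp, absOp, adjoint_adjoint,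
    opRpow_sqrt_two_mul (adjoint_mul_self_nonneg A) (sub_nonneg.mpr hv₁),
    opRpow_sqrt_two_mul (self_mul_adjoint_nonneg A) hv₀]
  refine Real.iSup_le (fun x => ?_) (by positivity)
  simpa only [sub_sub_cancel] using
    norm_inner_apply_self_le A (sub_nonneg.mpr hv₁) (sub_le_self 1 hv₀) x.2
end

section
/- For every bounded linear operator A on a complex Hilbert space, (1/2) sqrt( ‖ |A|² + |A*|² ‖ + ‖ |A||A*| + |A*||A| ‖ ) ≤ (1/2)( ‖A‖ + ‖A²‖^{1/2} ). -/
variable {H : Type*} [NormedAddCommGroup H] [InnerProductSpace ℂ H] [CompleteSpace H]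

/-!
Put `P = A⋆A = |A|²` and `Q = AA⋆ = |A⋆|²`. The C⋆-identity gives `‖|A||A⋆|‖ = ‖A²‖`, so the
cross term is at most `2‖A²‖`. For `s = ‖P + Q‖`, the C⋆-identity again gives
`s² = ‖(P + Q)²‖ ≤ ‖P² + Q²‖ + 2‖PQ‖`, where `P² ≤ ‖A‖²P`, `Q² ≤ ‖A‖²Q` and
`‖PQ‖ = ‖A⋆A²A⋆‖ ≤ ‖A‖²‖A²‖`. Writing `a = ‖A‖` and `b = ‖A²‖^{1/2} ≤ a`, the quadratic inequality
`s² ≤ a²s + 2a²b²` forces `s ≤ a² + 2ab - b²`, and then `s + 2b² ≤ (a + b)²`.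
-/

section CStarRing

variable {E : Type*} [NonUnitalNormedRing E] [StarRing E] [CStarRing E]

lemma norm_eq_of_star_mul_self_eq {y z : E} (h : star y * y = star z * z) : ‖y‖ = ‖z‖ := by
  have := congrArg norm h
  rw [CStarRing.norm_star_mul_self, CStarRing.norm_star_mul_self] at this
  exact (mul_self_inj (norm_nonneg y) (norm_nonneg z)).mp this

lemma norm_mul_eq_norm_mul_self_of_mul_self_eq {p q x : E} (hp : IsSelfAdjoint p)
    (hq : IsSelfAdjoint q) (hp2 : p * p = star x * x) (hq2 : q * q = x * star x) :
    ‖p * q‖ = ‖x * x‖ := by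
  have h₁ : ‖p * q‖ = ‖x * q‖ := norm_eq_of_star_mul_self_eq <| by
    calc star (p * q) * (p * q) = q * (p * p) * q := by
          rw [star_mul, hp.star_eq, hq.star_eq]; noncomm_ring
      _ = star (x * q) * (x * q) := by rw [hp2, star_mul, hq.star_eq]; noncomm_ring
  have h₂ : ‖star (x * q)‖ = ‖star (x * x)‖ := norm_eq_of_star_mul_self_eq <| by
    calc star (star (x * q)) * star (x * q) = x * (q * q) * star x := by
          rw [star_star, star_mul, hq.star_eq]; noncomm_ring
      _ = star (star (x * x)) * star (x * x) := by rw [hq2, star_star, star_mul]; noncomm_ring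
  rwa [norm_star, norm_star, ← h₁] at h₂

lemma norm_mul_add_mul_le {p q : E} (hp : IsSelfAdjoint p) (hq : IsSelfAdjoint q) :
    ‖p * q + q * p‖ ≤ 2 * ‖p * q‖ := by
  calc ‖p * q + q * p‖ ≤ ‖p * q‖ + ‖star (p * q)‖ := by
        rw [star_mul, hp.star_eq, hq.star_eq]; exact norm_add_le _ _
    _ = 2 * ‖p * q‖ := by rw [norm_star]; ring

end CStarRing

section CStarAlgebra

variable {A : Type*} [NonUnitalCStarAlgebra A] [PartialOrder A] [StarOrderedRing A]

lemma star_mul_self_mul_self_add_le (x : A) :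
    star x * x * (star x * x) + x * star x * (x * star x) ≤
      ‖x‖ ^ 2 • (star x * x + x * star x) := by
  have h₁ := CStarAlgebra.star_left_conjugate_le_norm_smul (a := x) (b := x * star x)
    (.mul_star_self x)
  have h₂ := CStarAlgebra.star_right_conjugate_le_norm_smul (a := x) (b := star x * x)
    (.star_mul_self x)
  rw [CStarRing.norm_self_mul_star, ← sq] at h₁
  rw [CStarRing.norm_star_mul_self, ← sq] at h₂
  simpa only [smul_add, mul_assoc] using add_le_add h₁ h₂

lemma sq_norm_star_mul_self_add_mul_star_self_le (x : A) :
    ‖star x * x + x * star x‖ ^ 2 ≤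
      ‖x‖ ^ 2 * ‖star x * x + x * star x‖ + 2 * (‖x‖ ^ 2 * ‖x * x‖) := by
  set P := star x * x
  set Q := x * star x
  have hP : IsSelfAdjoint P := .star_mul_self x
  have hQ : IsSelfAdjoint Q := .mul_star_self x
  have hdiag : ‖P * P + Q * Q‖ ≤ ‖x‖ ^ 2 * ‖P + Q‖ := by
    have := CStarAlgebra.norm_le_norm_of_nonneg_of_le
      (add_nonneg hP.mul_self_nonneg hQ.mul_self_nonneg) (star_mul_self_mul_self_add_le x)
    rwa [norm_smul, Real.norm_of_nonneg (by positivity)] at this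
  have hoff : ‖P * Q‖ ≤ ‖x‖ ^ 2 * ‖x * x‖ := by
    calc ‖P * Q‖ = ‖star x * (x * x) * star x‖ := by simp only [P, Q, mul_assoc]
      _ ≤ ‖star x‖ * ‖x * x‖ * ‖star x‖ := norm_mul₃_le
      _ = ‖x‖ ^ 2 * ‖x * x‖ := by rw [norm_star]; ring
  calc ‖P + Q‖ ^ 2 = ‖(P * P + Q * Q) + (P * Q + Q * P)‖ := by
        rw [← (hP.add hQ).norm_mul_self]; congr 1; noncomm_ring
    _ ≤ ‖P * P + Q * Q‖ + 2 * ‖P * Q‖ :=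
        (norm_add_le _ _).trans (add_le_add le_rfl (norm_mul_add_mul_le hP hQ))
    _ ≤ _ := by linarith

end CStarAlgebra

lemma add_two_mul_sq_le_sq_add_of_sq_le {s a b : ℝ} (hb : 0 ≤ b) (hba : b ≤ a)
    (h : s ^ 2 ≤ a ^ 2 * s + 2 * (a ^ 2 * b ^ 2)) : s + 2 * b ^ 2 ≤ (a + b) ^ 2 := by
  -- `s ↦ s² - a²s` is increasing beyond `a²/2`, and at `t` it already exceeds `2a²b²`.
  set t := a ^ 2 + 2 * a * b - b ^ 2
  have hat : a ^ 2 ≤ t := by nlinarith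
  have ht : 2 * (a ^ 2 * b ^ 2) ≤ t ^ 2 - a ^ 2 * t := by
    have : t ^ 2 - a ^ 2 * t - 2 * (a ^ 2 * b ^ 2) =
        b * (a - b) * (2 * a ^ 2 + 3 * a * b - b ^ 2) := by ring
    nlinarith [mul_nonneg (mul_nonneg hb (sub_nonneg.2 hba))
      (by nlinarith : 0 ≤ 2 * a ^ 2 + 3 * a * b - b ^ 2)]
  have hst : s ≤ t := by
    by_contra! hts
    nlinarith [mul_pos (sub_pos.2 hts) (by nlinarith : 0 < s + t - a ^ 2)]
  linarith

lemma absOp_nonneg (A : H →L[ℂ] H) : 0 ≤ absOp A := CFC.sqrt_nonneg _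

lemma absOp_mul_self (A : H →L[ℂ] H) : absOp A * absOp A = star A * A := by
  rw [absOp, ← ContinuousLinearMap.star_eq_adjoint]
  exact CFC.sqrt_mul_sqrt_self _ (star_mul_self_nonneg A)

lemma absOp_adjoint_mul_self (A : H →L[ℂ] H) :
    absOp (ContinuousLinearMap.adjoint A) * absOp (ContinuousLinearMap.adjoint A) =
      A * star A := by
  simpa only [ContinuousLinearMap.star_eq_adjoint, ContinuousLinearMap.adjoint_adjoint] using
    absOp_mul_self (ContinuousLinearMap.adjoint A)

lemma norm_absOp_mul_absOp_adjoint (A : H →L[ℂ] H) :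
    ‖absOp A * absOp (ContinuousLinearMap.adjoint A)‖ = ‖A * A‖ :=
  norm_mul_eq_norm_mul_self_of_mul_self_eq (absOp_nonneg A).isSelfAdjoint
    (absOp_nonneg _).isSelfAdjoint (absOp_mul_self A) (absOp_adjoint_mul_self A)

theorem stmt7 (A : H →L[ℂ] H) :
    (1/2) * Real.sqrt (‖(absOp A)^2 + (absOp (ContinuousLinearMap.adjoint A))^2‖ +
      ‖absOp A * absOp (ContinuousLinearMap.adjoint A) +
        absOp (ContinuousLinearMap.adjoint A) * absOp A‖) ≤
    (1/2) * (‖A‖ + ‖A^2‖ ^ ((1:ℝ)/2)) := by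
  rw [← Real.sqrt_eq_rpow, sq A, sq (absOp A), sq (absOp _), absOp_mul_self,
    absOp_adjoint_mul_self]
  set b := √‖A * A‖
  have hb : 0 ≤ b := Real.sqrt_nonneg _
  have hb_sq : b ^ 2 = ‖A * A‖ := Real.sq_sqrt (norm_nonneg _)
  have hba : b ≤ ‖A‖ := by
    rw [Real.sqrt_le_left (norm_nonneg A), sq]
    exact norm_mul_le A A
  have hcross := norm_mul_add_mul_le (absOp_nonneg A).isSelfAdjoint
    (absOp_nonneg (ContinuousLinearMap.adjoint A)).isSelfAdjoint
  rw [norm_absOp_mul_absOp_adjoint, ← hb_sq] at hcross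
  have hsum := sq_norm_star_mul_self_add_mul_star_self_le A
  rw [← hb_sq] at hsum
  have key := add_two_mul_sq_le_sq_add_of_sq_le hb hba hsum
  calc (1/2) * √(‖star A * A + A * star A‖ + _)
      ≤ (1/2) * √((‖A‖ + b) ^ 2) := by gcongr; linarith
    _ = (1/2) * (‖A‖ + b) := by rw [Real.sqrt_sq (by positivity)]
end

section
/- For every bounded linear operator A on a complex Hilbert space, ‖ |A||A*| + |A*||A| ‖ ≤ 2 ‖A²‖. -/
variable {H : Type*} [NormedAddCommGroup H] [InnerProductSpace ℂ H] [CompleteSpace H]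

/-!
In any C⋆-algebra, `(|a| b)⋆ (|a| b) = b⋆ a⋆ a b = (a b)⋆ (a b)`, so the C⋆-identity gives
`‖|a| b‖ = ‖a b‖`. Applying this twice, `‖|a| |a⋆|‖ = ‖a |a⋆|‖ = ‖|a⋆| a⋆‖ = ‖a⋆ a⋆‖ = ‖a a‖`; the
second summand `|a⋆| |a|` is the adjoint of the first, so the triangle inequality finishes.
-/

namespace CFC

variable {A : Type*} [NonUnitalCStarAlgebra A] [PartialOrder A] [StarOrderedRing A]

lemma norm_abs_mul (a b : A) : ‖abs a * b‖ = ‖a * b‖ := by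
  have h : star (abs a * b) * (abs a * b) = star (a * b) * (a * b) := by
    rw [star_mul, star_mul, (abs_nonneg a).star_eq, mul_assoc, ← mul_assoc (abs a),
      abs_mul_abs, mul_assoc, mul_assoc]
  rw [← sq_eq_sq₀ (norm_nonneg _) (norm_nonneg _), sq, sq, ← CStarRing.norm_star_mul_self, h,
    CStarRing.norm_star_mul_self]

lemma norm_abs_mul_abs_star (a : A) : ‖abs a * abs (star a)‖ = ‖a * a‖ := by
  rw [norm_abs_mul, ← norm_star, star_mul, (abs_nonneg (star a)).star_eq, norm_abs_mul,
    ← star_mul, norm_star]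

lemma norm_abs_mul_abs_star_add_le (a : A) :
    ‖abs a * abs (star a) + abs (star a) * abs a‖ ≤ 2 * ‖a * a‖ := by
  have hstar : abs (star a) * abs a = star (abs a * abs (star a)) := by
    rw [star_mul, (abs_nonneg (star a)).star_eq, (abs_nonneg a).star_eq]
  calc ‖abs a * abs (star a) + abs (star a) * abs a‖
      ≤ ‖abs a * abs (star a)‖ + ‖abs (star a) * abs a‖ := norm_add_le _ _
    _ = 2 * ‖a * a‖ := by rw [hstar, norm_star, norm_abs_mul_abs_star]; ring

end CFC

theorem stmt9 (A : H →L[ℂ] H) :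
    ‖absOp A * absOp (ContinuousLinearMap.adjoint A) +
      absOp (ContinuousLinearMap.adjoint A) * absOp A‖ ≤ 2 * ‖A^2‖ := by
  rw [sq]
  -- `absOp` unfolds to `CFC.abs`, since `star` on `H →L[ℂ] H` is the adjoint
  exact CFC.norm_abs_mul_abs_star_add_le A
end

section
/- For all bounded linear operators A, B on a complex Hilbert space, sqrt( ‖ |A|² + |B|² ‖ + ‖ A*B + B*A ‖ ) ≤ sqrt( ‖A‖² + ‖B‖² + 2‖A*B‖ ) ≤ ‖A‖ + ‖B‖. -/
variable {H : Type*} [NormedAddCommGroup H] [InnerProductSpace ℂ H] [CompleteSpace H]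

/-
Since |A|² = A*A and ‖A*A‖ = ‖A‖², the first inequality is the triangle inequality together with
‖B*A‖ = ‖(A*B)*‖ = ‖A*B‖. The second follows from ‖A*B‖ ≤ ‖A*‖‖B‖ = ‖A‖‖B‖ by squaring.
-/

section NormedStarRing

variable {E : Type*} [NormedRing E] [StarRing E] [NormedStarGroup E]

theorem norm_star_mul_le (a b : E) : ‖star a * b‖ ≤ ‖a‖ * ‖b‖ :=
  (norm_mul_le _ _).trans_eq (by rw [norm_star])

theorem norm_star_mul_add_star_mul_le (a b : E) :
    ‖star a * b + star b * a‖ ≤ 2 * ‖star a * b‖ := by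
  have h : ‖star b * a‖ = ‖star a * b‖ := by rw [← norm_star (star a * b), star_mul, star_star]
  linarith [norm_add_le (star a * b) (star b * a)]

end NormedStarRing

theorem norm_star_mul_self_add_le {E : Type*} [NonUnitalNormedRing E] [StarRing E] [CStarRing E]
    (a b : E) :
    ‖star a * a + star b * b‖ ≤ ‖a‖ ^ 2 + ‖b‖ ^ 2 := by
  simpa only [CStarRing.norm_star_mul_self, sq] using norm_add_le (star a * a) (star b * b)

theorem absOp_sq (A : H →L[ℂ] H) : absOp A ^ 2 = star A * A :=
  CFC.sq_sqrt _ (star_mul_self_nonneg A)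

theorem Real.sqrt_sq_add_sq_add_two_mul_le {x y c : ℝ} (hx : 0 ≤ x) (hy : 0 ≤ y)
    (hc : c ≤ x * y) : √(x ^ 2 + y ^ 2 + 2 * c) ≤ x + y :=
  (Real.sqrt_le_left (add_nonneg hx hy)).2 (by nlinarith)

theorem stmt13 (A B : H →L[ℂ] H) :
    Real.sqrt (‖(absOp A)^2 + (absOp B)^2‖ +
        ‖ContinuousLinearMap.adjoint A * B + ContinuousLinearMap.adjoint B * A‖) ≤
      Real.sqrt (‖A‖^2 + ‖B‖^2 + 2 * ‖ContinuousLinearMap.adjoint A * B‖) ∧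
    Real.sqrt (‖A‖^2 + ‖B‖^2 + 2 * ‖ContinuousLinearMap.adjoint A * B‖) ≤ ‖A‖ + ‖B‖ := by
  simp only [← ContinuousLinearMap.star_eq_adjoint, absOp_sq]
  refine ⟨Real.sqrt_le_sqrt ?_, ?_⟩
  · linarith [norm_star_mul_self_add_le A B, norm_star_mul_add_star_mul_le A B]
  · exact Real.sqrt_sq_add_sq_add_two_mul_le (norm_nonneg A) (norm_nonneg B)
      (norm_star_mul_le A B)
end

section
/- For every bounded linear operator A on a complex Hilbert space, (1/2) sqrt( 2ω(A)^4 + (1/8) ‖ (A + A*)² (A − A*)² ‖ ) ≤ ω(A)^2. -/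
variable {H : Type*} [NormedAddCommGroup H] [InnerProductSpace ℂ H] [CompleteSpace H]

/-!
The real and imaginary parts `(A + A*)/2` and `(A - A*)/(2i)` are self-adjoint, and the norm of a
self-adjoint operator is the supremum of `|⟪T x, x⟫|` over unit vectors, which for these two is
at most `ω(A)`. Hence `‖(A + A*)² (A - A*)²‖ ≤ (2ω(A))⁴`, and the left-hand side is at most
`½ √(2ω(A)⁴ + 2ω(A)⁴) = ω(A)²`.
-/

open ContinuousLinearMap RCLike

section SelfAdjoint

variable {𝕜 E : Type*} [RCLike 𝕜] [NormedAddCommGroup E] [InnerProductSpace 𝕜 E] [CompleteSpace E]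

theorem IsSelfAdjoint.norm_le_of_abs_re_inner_le {T : E →L[𝕜] E} (hT : IsSelfAdjoint T)
    {M : ℝ} (hM : 0 ≤ M) (h : ∀ x, |re (inner 𝕜 (T x) x)| ≤ M * ‖x‖ ^ 2) : ‖T‖ ≤ M := by
  rw [T.norm_eq_iSup_rayleighQuotient hT.isSymmetric]
  refine ciSup_le fun x ↦ ?_
  rcases eq_or_ne x 0 with rfl | hx
  · simpa using hM
  · rw [rayleighQuotient, reApplyInnerSelf_apply, abs_div, abs_sq, div_le_iff₀ (by positivity)]
    exact h x

theorem ContinuousLinearMap.norm_add_adjoint_le {B : E →L[𝕜] E} {M : ℝ} (hM : 0 ≤ M)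
    (h : ∀ x, ‖inner 𝕜 (B x) x‖ ≤ M * ‖x‖ ^ 2) : ‖B + adjoint B‖ ≤ 2 * M := by
  refine (star_eq_adjoint B ▸ IsSelfAdjoint.add_star_self B).norm_le_of_abs_re_inner_le
    (by positivity) fun x ↦ ?_
  have hre : re (inner 𝕜 ((B + adjoint B) x) x) = 2 * re (inner 𝕜 (B x) x) := by
    rw [add_apply, inner_add_left, adjoint_inner_left, map_add, ← inner_conj_symm, conj_re]
    ring
  calc |re (inner 𝕜 ((B + adjoint B) x) x)| = 2 * |re (inner 𝕜 (B x) x)| := by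
        rw [hre, abs_mul, abs_two]
    _ ≤ 2 * ‖inner 𝕜 (B x) x‖ := by gcongr; exact abs_re_le_norm _
    _ ≤ 2 * M * ‖x‖ ^ 2 := by rw [mul_assoc]; gcongr; exact h x

end SelfAdjoint

section NumRadius

variable {E : Type*} [NormedAddCommGroup E] [InnerProductSpace ℂ E]

theorem numRadius_nonneg (A : E →L[ℂ] E) : 0 ≤ numRadius A :=
  Real.iSup_nonneg fun _ ↦ norm_nonneg _

theorem norm_inner_le_numRadius {A : E →L[ℂ] E} {x : E} (hx : ‖x‖ = 1) :
    ‖inner ℂ (A x) x‖ ≤ numRadius A := by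
  refine le_ciSup (f := fun x : {x : E // ‖x‖ = 1} ↦ ‖inner ℂ (A x) (x : E)‖) ⟨‖A‖, ?_⟩ ⟨x, hx⟩
  rintro _ ⟨⟨y, hy⟩, rfl⟩
  calc ‖inner ℂ (A y) y‖ ≤ ‖A y‖ * ‖y‖ := norm_inner_le_norm _ _
    _ ≤ ‖A‖ * ‖y‖ * ‖y‖ := by gcongr; exact A.le_opNorm y
    _ = ‖A‖ := by simp [hy]

theorem norm_inner_le_numRadius_mul_sq (A : E →L[ℂ] E) (x : E) :
    ‖inner ℂ (A x) x‖ ≤ numRadius A * ‖x‖ ^ 2 := by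
  rcases eq_or_ne x 0 with rfl | hx
  · simp
  have hu := norm_inner_le_numRadius (A := A) (norm_smul_inv_norm (𝕜 := ℂ) hx)
  rw [map_smul, inner_smul_left, inner_smul_right, norm_mul, norm_mul, Complex.norm_conj,
    ← mul_assoc, ← sq, norm_inv, RCLike.norm_ofReal, abs_norm, inv_pow,
    inv_mul_le_iff₀ (by positivity)] at hu
  linarith

variable [CompleteSpace E]

theorem norm_add_adjoint_le_two_mul_numRadius (A : E →L[ℂ] E) :
    ‖A + adjoint A‖ ≤ 2 * numRadius A :=
  norm_add_adjoint_le (numRadius_nonneg A) (norm_inner_le_numRadius_mul_sq A)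

theorem norm_sub_adjoint_le_two_mul_numRadius (A : E →L[ℂ] E) :
    ‖A - adjoint A‖ ≤ 2 * numRadius A := by
  have h : ‖Complex.I • A + adjoint (Complex.I • A)‖ ≤ 2 * numRadius A := by
    refine norm_add_adjoint_le (numRadius_nonneg A) fun x ↦ ?_
    rw [smul_apply, inner_smul_left, norm_mul, Complex.norm_conj, Complex.norm_I, one_mul]
    exact norm_inner_le_numRadius_mul_sq A x
  have hI : Complex.I • A + adjoint (Complex.I • A) = Complex.I • (A - adjoint A) := by
    rw [← star_eq_adjoint, star_smul, star_eq_adjoint, Complex.star_def, Complex.conj_I, smul_sub,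
      neg_smul, sub_eq_add_neg]
  rwa [hI, norm_smul, Complex.norm_I, one_mul] at h

end NumRadius

theorem stmt15 (A : H →L[ℂ] H) :
    (1/2) * Real.sqrt (2 * numRadius A ^ 4 +
      (1/8) * ‖(A + ContinuousLinearMap.adjoint A)^2 * (A - ContinuousLinearMap.adjoint A)^2‖) ≤
    numRadius A ^ 2 := by
  have hω := numRadius_nonneg A
  have hPQ : ‖(A + adjoint A) ^ 2 * (A - adjoint A) ^ 2‖ ≤ 16 * numRadius A ^ 4 :=
    calc _ ≤ ‖A + adjoint A‖ ^ 2 * ‖A - adjoint A‖ ^ 2 :=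
          (norm_mul_le _ _).trans (by gcongr <;> exact norm_pow_le' _ two_pos)
      _ ≤ (2 * numRadius A) ^ 2 * (2 * numRadius A) ^ 2 := by
          gcongr
          exacts [norm_add_adjoint_le_two_mul_numRadius A, norm_sub_adjoint_le_two_mul_numRadius A]
      _ = 16 * numRadius A ^ 4 := by ring
  have hsqrt : Real.sqrt (2 * numRadius A ^ 4 + (1/8) * ‖(A + adjoint A) ^ 2 * (A - adjoint A) ^ 2‖)
      ≤ 2 * numRadius A ^ 2 :=
    (Real.sqrt_le_left (by positivity)).mpr (by nlinarith)
  linarith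
end

section
/- For positive bounded linear operators S and T on a complex Hilbert space, ‖ST + TS‖ ≤ ‖S² + T²‖. -/
variable {H : Type*} [NormedAddCommGroup H] [InnerProductSpace ℂ H] [CompleteSpace H]

/-!
For self-adjoint `S`, `T` the squares `(S + T)²` and `(S - T)²` are positive, which says exactly
that `-(S² + T²) ≤ ST + TS ≤ S² + T²`. In a C⋆-algebra an order interval `[-b, b]` lies in the
ball of radius `‖b‖`, because the norm of a self-adjoint element is attained in its spectrum.
-/

section StarOrderedRing

variable {R : Type*} [Ring R] [PartialOrder R] [StarRing R] [StarOrderedRing R] {a b : R}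

lemma IsSelfAdjoint.mul_add_mul_le_sq_add_sq (ha : IsSelfAdjoint a) (hb : IsSelfAdjoint b) :
    a * b + b * a ≤ a ^ 2 + b ^ 2 := by
  have h : (a - b) ^ 2 = a ^ 2 + b ^ 2 - (a * b + b * a) := by noncomm_ring
  exact sub_nonneg.mp (h ▸ (ha.sub hb).sq_nonneg)

lemma IsSelfAdjoint.neg_sq_add_sq_le_mul_add_mul (ha : IsSelfAdjoint a) (hb : IsSelfAdjoint b) :
    -(a ^ 2 + b ^ 2) ≤ a * b + b * a := by
  have h : (a + b) ^ 2 = a * b + b * a - -(a ^ 2 + b ^ 2) := by noncomm_ring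
  exact sub_nonneg.mp (h ▸ (ha.add hb).sq_nonneg)

end StarOrderedRing

section CStarAlgebra

variable {A : Type*} [CStarAlgebra A] [PartialOrder A] [StarOrderedRing A]

lemma IsSelfAdjoint.norm_le_of_neg_algebraMap_le_of_le_algebraMap {a : A} {r : ℝ}
    (ha : IsSelfAdjoint a) (hr : 0 ≤ r) (h₁ : -algebraMap ℝ A r ≤ a)
    (h₂ : a ≤ algebraMap ℝ A r) : ‖a‖ ≤ r := by
  obtain hA | hA := subsingleton_or_nontrivial A
  · simpa [Subsingleton.elim a 0] using hr
  rw [le_algebraMap_iff_spectrum_le] at h₂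
  rw [← map_neg, algebraMap_le_iff_le_spectrum] at h₁
  rcases CStarAlgebra.norm_or_neg_norm_mem_spectrum ha with h | h
  · exact h₂ _ h
  · linarith [h₁ _ h]

lemma IsSelfAdjoint.norm_le_norm_of_neg_le_of_le {a b : A} (ha : IsSelfAdjoint a)
    (h₁ : -b ≤ a) (h₂ : a ≤ b) : ‖a‖ ≤ ‖b‖ := by
  have hb : IsSelfAdjoint b := by
    simpa using (IsSelfAdjoint.of_nonneg (sub_nonneg.mpr h₂)).add ha
  exact ha.norm_le_of_neg_algebraMap_le_of_le_algebraMap (norm_nonneg b)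
    ((neg_le_neg hb.le_algebraMap_norm_self).trans h₁) (h₂.trans hb.le_algebraMap_norm_self)

lemma IsSelfAdjoint.norm_mul_add_mul_le_norm_sq_add_sq {a b : A} (ha : IsSelfAdjoint a)
    (hb : IsSelfAdjoint b) : ‖a * b + b * a‖ ≤ ‖a ^ 2 + b ^ 2‖ := by
  have hab : IsSelfAdjoint (a * b + b * a) := by
    rw [IsSelfAdjoint, star_add, star_mul, star_mul, ha.star_eq, hb.star_eq, add_comm]
  exact hab.norm_le_norm_of_neg_le_of_le (ha.neg_sq_add_sq_le_mul_add_mul hb)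
    (ha.mul_add_mul_le_sq_add_sq hb)

end CStarAlgebra

theorem stmt17 (S T : H →L[ℂ] H) (hS : 0 ≤ S) (hT : 0 ≤ T) :
    ‖S * T + T * S‖ ≤ ‖S^2 + T^2‖ :=
  (IsSelfAdjoint.of_nonneg hS).norm_mul_add_mul_le_norm_sq_add_sq (.of_nonneg hT)
end
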